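/- Let (𝔾, ϑ) be an edge-labeled graph such that: (E1) 𝔾 is simple, planar and 3-connected; (E2) 𝔾 is regular of degree 3; (E3) the labels lie in {0, 1}; (E4) at every vertex the three incident edges e₁, e₂, e₃ satisfy ϑ(e₁) + ϑ(e₂) + ϑ(e₃) ≡ 1 (mod 2). Then, writing v, e, f for the numbers of vertices, edges and faces of 𝔾 and e₂ for the number of 0-edges, one has 2e₂ ≤ 4(f − 2); in particular there is a face of 𝔾 whose number of 0-edges is at most 3. -/

import Mathlib

open Matrix
open scoped Classical

noncomputable section

/-! ### The projective sphere and projective automorphisms -/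

/-- `ℝ^{n+1}`, the vector space `V` underlying the projective sphere `Sⁿ`. -/
abbrev Vec (n : ℕ) := Fin (n + 1) → ℝ

/-- A matrix lies in `SL^±_{n+1}(ℝ)` iff its determinant is `±1`. -/
def IsSLpm {n : ℕ} (M : Matrix (Fin (n + 1)) (Fin (n + 1)) ℝ) : Prop :=
  M.det = 1 ∨ M.det = -1

/-- A reflection: a projective automorphism of the form `I - b ⊗ α` with `α(b) = 2`. -/
def IsReflMat {n : ℕ} (M : Matrix (Fin (n + 1)) (Fin (n + 1)) ℝ) : Prop :=
  ∃ a b : Vec n, a ⬝ᵥ b = 2 ∧ M = 1 - Matrix.vecMulVec b a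

/-- The projective sphere `Sⁿ`: the space of rays in `ℝ^{n+1}`. -/
abbrev PSph (n : ℕ) := Module.Ray ℝ (Vec n)

instance {n : ℕ} : TopologicalSpace (RayVector ℝ (Vec n)) :=
  inferInstanceAs (TopologicalSpace {v : Vec n // v ≠ 0})

instance {n : ℕ} : TopologicalSpace (PSph n) :=
  inferInstanceAs (TopologicalSpace (Quotient (RayVector.Setoid ℝ (Vec n))))

/-- The (projective) action of `GL_{n+1}(ℝ)` on the projective sphere. -/
def rayAct {n : ℕ} (g : GL (Fin (n + 1)) ℝ) : PSph n → PSph n :=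
  Module.Ray.map (Matrix.GeneralLinearGroup.toLin g).toLinearEquiv

/-- The open cone in `ℝ^{n+1}` over a set of rays. -/
def rayCone {n : ℕ} (Ω : Set (PSph n)) : Set (Vec n) :=
  {v | ∃ h : v ≠ 0, rayOfNeZero ℝ v h ∈ Ω}

/-- A properly convex open domain in `Sⁿ`: a nonempty open convex subset whose closure
contains no pair of antipodal points. -/
def IsPCDomain {n : ℕ} (Ω : Set (PSph n)) : Prop :=
  Ω.Nonempty ∧ IsOpen Ω ∧ Convex ℝ (rayCone Ω) ∧
    ∀ v : Vec n, v ≠ 0 → ¬(v ∈ closure (rayCone Ω) ∧ -v ∈ closure (rayCone Ω))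

lemma vecMulVec_mul_vecMulVec' {n : ℕ} (b a c d : Vec n) :
    Matrix.vecMulVec b a * Matrix.vecMulVec c d = (a ⬝ᵥ c) • Matrix.vecMulVec b d := by
  ext i j
  simp only [Matrix.mul_apply, Matrix.vecMulVec_apply, Matrix.smul_apply, smul_eq_mul,
    dotProduct, Finset.sum_mul]
  exact Finset.sum_congr rfl fun k _ => by ring

lemma reflMat_mul_self {n : ℕ} (a b : Vec n) (h : a ⬝ᵥ b = 2) :
    (1 - Matrix.vecMulVec b a) * (1 - Matrix.vecMulVec b a) = 1 := by
  have hX : Matrix.vecMulVec b a * Matrix.vecMulVec b a = (2 : ℝ) • Matrix.vecMulVec b a := by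
    rw [vecMulVec_mul_vecMulVec', h]
  simp only [sub_mul, mul_sub, mul_one, one_mul, hX, two_smul]
  abel

/-- The reflection `I - b ⊗ a` (with `a ⬝ᵥ b = 2`) as an element of `GL_{n+1}(ℝ)`. -/
def reflGL {n : ℕ} (a b : Vec n) (h : a ⬝ᵥ b = 2) : GL (Fin (n + 1)) ℝ :=
  ⟨1 - Matrix.vecMulVec b a, 1 - Matrix.vecMulVec b a,
    reflMat_mul_self a b h, reflMat_mul_self a b h⟩

/-- The conjugate `g γ g⁻¹`, as a matrix. -/
def conjMat {n : ℕ} (g γ : GL (Fin (n + 1)) ℝ) : Matrix (Fin (n + 1)) (Fin (n + 1)) ℝ :=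
  (↑g : Matrix (Fin (n + 1)) (Fin (n + 1)) ℝ) * (↑γ : Matrix (Fin (n + 1)) (Fin (n + 1)) ℝ) *
    (↑(g⁻¹) : Matrix (Fin (n + 1)) (Fin (n + 1)) ℝ)

/-! ### Dividing groups -/

/-- A subgroup of `GL_{n+1}(ℝ)` divides a properly convex open set `Ω ⊂ Sⁿ`:
it preserves `Ω` and acts properly discontinuously and cocompactly on it. -/
def ActsDividinglyOn {n : ℕ} (Γ : Subgroup (GL (Fin (n + 1)) ℝ)) (Ω : Set (PSph n)) : Prop :=
  (∀ γ ∈ Γ, rayAct γ '' Ω = Ω) ∧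
  (∀ K : Set (PSph n), K ⊆ Ω → IsCompact K →
    {γ : GL (Fin (n + 1)) ℝ | γ ∈ Γ ∧ ((rayAct γ '' K) ∩ K).Nonempty}.Finite) ∧
  (∃ K : Set (PSph n), IsCompact K ∧ K ⊆ Ω ∧ ∀ x ∈ Ω, ∃ γ ∈ Γ, x ∈ rayAct γ '' K)

/-- A discrete subgroup of `SL^±_{n+1}(ℝ)` is *dividing* if it divides some properly convex
open subset of `Sⁿ`. -/
def IsDividing {n : ℕ} (Γ : Subgroup (GL (Fin (n + 1)) ℝ)) : Prop :=
  DiscreteTopology ↥Γ ∧ ∃ Ω : Set (PSph n), IsPCDomain Ω ∧ ActsDividinglyOn Γ Ω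

/-- Irreducibility: no proper nonzero invariant linear subspace. -/
def IsIrredSubgroup {n : ℕ} (Γ : Subgroup (GL (Fin (n + 1)) ℝ)) : Prop :=
  ∀ W : Submodule ℝ (Vec n),
    (∀ γ ∈ Γ, ∀ w ∈ W, (↑γ : Matrix (Fin (n + 1)) (Fin (n + 1)) ℝ) *ᵥ w ∈ W) → W = ⊥ ∨ W = ⊤

/-! ### Coxeter orbifold combinatorics -/

/-- The combinatorial data of a compact Coxeter `n`-orbifold: the (pairwise adjacency
structure of the) facets of the base polytope, together with the ridge orders. -/
structure CoxOrbifold (n : ℕ) where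
  f : ℕ
  Adj : Fin f → Fin f → Prop
  adj_symm : ∀ i j, Adj i j → Adj j i
  adj_irrefl : ∀ i, ¬ Adj i i
  ord : Fin f → Fin f → ℕ
  ord_symm : ∀ i j, ord i j = ord j i
  two_le_ord : ∀ i j, Adj i j → 2 ≤ ord i j

/-- The Coxeter matrix of a Coxeter orbifold: `M i i = 1`, `M i j = n_{ij}` for adjacent
facets, and `M i j = 0` (meaning `n_{ij} = ∞`) for non-adjacent facets. -/
def CoxOrbifold.coxMatrix {n : ℕ} (C : CoxOrbifold n) : CoxeterMatrix (Fin C.f) where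
  M := Matrix.of fun i j => if i = j then 1 else if C.Adj i j then C.ord i j else 0
  isSymm := by
    refine Matrix.IsSymm.ext fun i j => ?_
    by_cases h : i = j
    · subst h; simp
    · simp only [Matrix.of_apply, if_neg h, if_neg (Ne.symm h)]
      by_cases ha : C.Adj j i
      · rw [if_pos ha, if_pos (C.adj_symm j i ha), C.ord_symm i j]
      · rw [if_neg ha, if_neg (fun h' => ha (C.adj_symm i j h'))]
  diagonal := by intro i; simp
  off_diagonal := by
    intro i i' h
    simp only [Matrix.of_apply, if_neg h]
    by_cases ha : C.Adj i i'
    · rw [if_pos ha]; have := C.two_le_ord i i' ha; omega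
    · rw [if_neg ha]; omega

/-- The fundamental group of the Coxeter orbifold: the Coxeter group presented by the
Coxeter matrix. -/
def CoxOrbifold.group {n : ℕ} (C : CoxOrbifold n) : Type := C.coxMatrix.Group

instance {n : ℕ} (C : CoxOrbifold n) : Group C.group :=
  inferInstanceAs (Group C.coxMatrix.Group)

/-! ### Cartan matrices, components and types -/

/-- The principal submatrix `A_S`. -/
def restrictMat {ι : Type} (B : Matrix ι ι ℝ) (S : Set ι) : Matrix S S ℝ :=
  B.submatrix Subtype.val Subtype.val

/-- A square real matrix is *indecomposable* if it is not the direct sum of two smaller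
matrices. -/
def IndecomposableMat {ι : Type} (B : Matrix ι ι ℝ) : Prop :=
  ∀ S : Set ι, (∀ i ∈ S, ∀ j ∉ S, B i j = 0 ∧ B j i = 0) → S = ∅ ∨ S = Set.univ

/-- `S` indexes a component of the matrix `B` (for the decomposition into indecomposable
direct summands). -/
def IsComponent {ι : Type} (B : Matrix ι ι ℝ) (S : Set ι) : Prop :=
  S.Nonempty ∧ (∀ i ∈ S, ∀ j ∉ S, B i j = 0 ∧ B j i = 0) ∧
    IndecomposableMat (restrictMat B S)

/-- The principal submatrix `A_S` is of zero type: its smallest real eigenvalue is zero,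
i.e. `0` is a real eigenvalue and all real eigenvalues are nonnegative. -/
def ZeroTypeOn {ι : Type} [Fintype ι] (B : Matrix ι ι ℝ) (S : Set ι) : Prop :=
  haveI : Fintype S := Fintype.ofFinite _
  0 ∈ spectrum ℝ (restrictMat B S) ∧ ∀ μ ∈ spectrum ℝ (restrictMat B S), 0 ≤ μ

/-- Vinberg's conditions (L1) and (L2) for a Cartan matrix `A` compatible with the Coxeter
orbifold data `C`. -/
def IsCartanFor {n : ℕ} (C : CoxOrbifold n) (A : Matrix (Fin C.f) (Fin C.f) ℝ) : Prop :=
  (∀ i, A i i = 2) ∧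
  (∀ i j, i ≠ j → A i j ≤ 0 ∧ (A i j = 0 ↔ A j i = 0)) ∧
  (∀ i j, i ≠ j → C.Adj i j → A i j * A j i = 4 * Real.cos (Real.pi / C.ord i j) ^ 2) ∧
  (∀ i j, i ≠ j → ¬ C.Adj i j → 4 ≤ A i j * A j i)

/-- Vinberg's conditions (L1) and (L2)′: as `IsCartanFor`, but with the strict inequality
`a_{ij} a_{ji} > 4` for non-adjacent facets. -/
def IsCartanFor' {n : ℕ} (C : CoxOrbifold n) (A : Matrix (Fin C.f) (Fin C.f) ℝ) : Prop :=
  (∀ i, A i i = 2) ∧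
  (∀ i j, i ≠ j → A i j ≤ 0 ∧ (A i j = 0 ↔ A j i = 0)) ∧
  (∀ i j, i ≠ j → C.Adj i j → A i j * A j i = 4 * Real.cos (Real.pi / C.ord i j) ^ 2) ∧
  (∀ i j, i ≠ j → ¬ C.Adj i j → 4 < A i j * A j i)

/-- The space `ℙ𝕍(P̂)` of Cartan matrices: `f × f` matrices satisfying (L1) and (L2)′,
of rank `n+1` and with no component of zero type. -/
def PVSet {n : ℕ} (C : CoxOrbifold n) : Set (Matrix (Fin C.f) (Fin C.f) ℝ) :=
  {A | IsCartanFor' C A ∧ A.rank = n + 1 ∧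
    ∀ S : Set (Fin C.f), IsComponent A S → ¬ ZeroTypeOn A S}

/-- The action of the positive diagonal group `ℝ₊^f` on Cartan matrices, as a relation:
`(d₁, …, d_f) ∘ (a_{ij}) = (d_i d_j⁻¹ a_{ij})`. -/
def pvRel {n : ℕ} (C : CoxOrbifold n) (A A' : Matrix (Fin C.f) (Fin C.f) ℝ) : Prop :=
  ∃ d : Fin C.f → ℝ, (∀ i, 0 < d i) ∧ ∀ i j, A' i j = d i * (d j)⁻¹ * A i j

/-- A compact Coxeter orbifold admits a spherical structure iff its fundamental group
(a Coxeter group) is finite. -/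
def CoxOrbifold.AdmitsSpherical {n : ℕ} (C : CoxOrbifold n) : Prop :=
  Finite C.coxMatrix.Group

/-- A compact Coxeter `n`-orbifold admits a Euclidean structure iff it is realized by a
parabolic projective Coxeter group, which by Vinberg's criterion means: some compatible
Cartan matrix has all components of zero type and rank `n`. -/
def CoxOrbifold.AdmitsEuclidean {n : ℕ} (C : CoxOrbifold n) : Prop :=
  ∃ A : Matrix (Fin C.f) (Fin C.f) ℝ, IsCartanFor C A ∧
    (∀ S : Set (Fin C.f), IsComponent A S → ZeroTypeOn A S) ∧ A.rank = n

/-! ### Vinberg's equations and the solution space -/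

/-- The solution set `𝔻̃(P̂)` of Vinberg's equations, intersected with the open set `𝒰_{P̂}`,
for given facet adjacency data `Adj` and ridge orders `ord`.  A point consists of a tuple of
linear functionals `α_i` (as row vectors) and a tuple of reflection vectors `b_i`. -/
def VinbergSet (n f : ℕ) (Adj : Fin f → Fin f → Prop) (ord : Fin f → Fin f → ℕ) :
    Set ((Fin f → Vec n) × (Fin f → Vec n)) :=
  {p | (∀ i, p.1 i ⬝ᵥ p.2 i = 2) ∧
    (∀ i j, Adj i j → ord i j = 2 → p.1 i ⬝ᵥ p.2 j = 0) ∧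
    (∀ i j, Adj i j → 3 ≤ ord i j →
      (p.1 i ⬝ᵥ p.2 j) * (p.1 j ⬝ᵥ p.2 i) = 4 * Real.cos (Real.pi / ord i j) ^ 2) ∧
    (∃ v : Vec n, ∀ i, 0 < p.1 i ⬝ᵥ v) ∧
    Submodule.span ℝ (Set.range p.1) = ⊤ ∧
    (∀ i j, i ≠ j → ((Adj i j ∧ 3 ≤ ord i j) ∨ ¬ Adj i j) → p.1 i ⬝ᵥ p.2 j < 0) ∧
    (∀ i j, i ≠ j → ¬ Adj i j → 4 < (p.1 i ⬝ᵥ p.2 j) * (p.1 j ⬝ᵥ p.2 i))}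

/-- The orbit equivalence of the action of `G̃ = ℝ₊^f × SL^±_{n+1}(ℝ)` on tuples by
`(α_i, b_i) ↦ (d_i α_i g⁻¹, d_i⁻¹ g b_i)`. -/
def vinRel (n f : ℕ) (p q : (Fin f → Vec n) × (Fin f → Vec n)) : Prop :=
  ∃ (d : Fin f → ℝ) (g : GL (Fin (n + 1)) ℝ), (∀ i, 0 < d i) ∧
    IsSLpm (↑g : Matrix (Fin (n + 1)) (Fin (n + 1)) ℝ) ∧
    (∀ i, q.1 i = d i • Matrix.vecMul (p.1 i) (↑g⁻¹ : Matrix (Fin (n + 1)) (Fin (n + 1)) ℝ)) ∧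
    (∀ i, q.2 i = (d i)⁻¹ • ((↑g : Matrix (Fin (n + 1)) (Fin (n + 1)) ℝ) *ᵥ p.2 i))

/-- The orbit equivalence of the action of the subgroup `ℝ₊^f × {±I}` of `G̃`. -/
def vinRelSmall (n f : ℕ) (p q : (Fin f → Vec n) × (Fin f → Vec n)) : Prop :=
  ∃ (d : Fin f → ℝ) (ε : ℝ), (∀ i, 0 < d i) ∧ (ε = 1 ∨ ε = -1) ∧
    (∀ i, q.1 i = (d i * ε) • p.1 i) ∧ (∀ i, q.2 i = ((d i)⁻¹ * ε) • p.2 i)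

/-- The tuple of reflections `R_i = I - b_i α_i` associated with a solution of Vinberg's
equations. -/
def holTuple {n f : ℕ} {Adj : Fin f → Fin f → Prop} {ord : Fin f → Fin f → ℕ}
    (p : (Fin f → Vec n) × (Fin f → Vec n)) (hp : p ∈ VinbergSet n f Adj ord) :
    Fin f → GL (Fin (n + 1)) ℝ :=
  fun i => reflGL (p.1 i) (p.2 i) (hp.1 i)

/-! ### Representation spaces -/

/-- `Hom(π₁(P̂), SL^±_{n+1}(ℝ))`, as the real algebraic set of tuples of images of the
generating reflections, satisfying the Coxeter relations. -/
def HomSet {n : ℕ} (C : CoxOrbifold n) : Set (Fin C.f → GL (Fin (n + 1)) ℝ) :=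
  {ρ | C.coxMatrix.IsLiftable ρ ∧
    ∀ i, IsSLpm (↑(ρ i) : Matrix (Fin (n + 1)) (Fin (n + 1)) ℝ)}

/-- `D_rep(P̂)`: the set of discrete faithful representations
`h : π₁(P̂) → SL^±_{n+1}(ℝ)` whose image is a dividing reflection group. -/
def Drep {n : ℕ} (C : CoxOrbifold n) : Set (Fin C.f → GL (Fin (n + 1)) ℝ) :=
  {ρ | ∃ h : C.coxMatrix.IsLiftable ρ,
    Function.Injective ⇑(C.coxMatrix.toCoxeterSystem.lift ⟨ρ, h⟩) ∧
    (∀ i, IsReflMat (↑(ρ i) : Matrix (Fin (n + 1)) (Fin (n + 1)) ℝ) ∧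
      IsSLpm (↑(ρ i) : Matrix (Fin (n + 1)) (Fin (n + 1)) ℝ)) ∧
    IsDividing (Subgroup.closure (Set.range ρ))}

/-- Conjugacy of representations (the orbit equivalence of the `PGL_{n+1}(ℝ)`-action). -/
def conjRel {n f : ℕ} (ρ ρ' : Fin f → GL (Fin (n + 1)) ℝ) : Prop :=
  ∃ g : GL (Fin (n + 1)) ℝ, ∀ i, ρ' i = g * ρ i * g⁻¹
end

noncomputable section
open Matrix
/-! ### The hyperbolic side -/

/-- The Lorentzian signature vector `(-1, 1, …, 1)`. -/
def eta (n : ℕ) : Vec n := fun k => if k = 0 then -1 else 1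

/-- The Lorentzian inner product `⟨x, y⟩ = -x₁y₁ + x₂y₂ + ⋯ + x_{n+1}y_{n+1}`. -/
def lorentz {n : ℕ} (x y : Vec n) : ℝ := ∑ k, eta n k * x k * y k

/-- The linear functional `2⟨x, ·⟩` of the Lorentzian form, as a row vector. -/
def alphaOf {n : ℕ} (x : Vec n) : Vec n := fun k => 2 * eta n k * x k

/-- The hyperbolic reflection `v ↦ v - 2⟨b, v⟩ b`, as a matrix. -/
def hypReflMat {n : ℕ} (b : Vec n) : Matrix (Fin (n + 1)) (Fin (n + 1)) ℝ :=
  1 - Matrix.vecMulVec b (alphaOf b)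

/-- Data for a hyperbolic Coxeter `n`-polytope (in the Klein model, on the slice `x₁ = 1`):
outward unit normals `ν_i` of the facets and ridge orders. -/
structure HypData (n : ℕ) where
  f : ℕ
  ν : Fin f → Vec n
  ord : Fin f → Fin f → ℕ

namespace HypData
variable {n : ℕ} (Q : HypData n)

/-- The polytope `P ⊂ ℍⁿ` itself, in the Klein model slice `x₁ = 1`. -/
def body : Set (Vec n) :=
  {x | x 0 = 1 ∧ lorentz x x < 0 ∧ ∀ i, 0 ≤ lorentz (Q.ν i) x}

/-- Two facets are adjacent (meet in a ridge). -/
def Adj (i j : Fin Q.f) : Prop :=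
  i ≠ j ∧ ∃ x ∈ Q.body, lorentz (Q.ν i) x = 0 ∧ lorentz (Q.ν j) x = 0

/-- `Q` is a compact hyperbolic Coxeter `n`-polytope: compact, nondegenerate, with unit
normals, and all dihedral angles `π/n_{ij}` for integers `n_{ij} ≥ 2`. -/
def IsCoxeter : Prop :=
  (∀ i, lorentz (Q.ν i) (Q.ν i) = 1) ∧
  (∀ i j, Q.ord i j = Q.ord j i) ∧
  IsCompact Q.body ∧
  (∃ x ∈ Q.body, ∀ i, 0 < lorentz (Q.ν i) x) ∧
  (∀ i, ∃ x ∈ Q.body, lorentz (Q.ν i) x = 0 ∧ ∀ j, j ≠ i → 0 < lorentz (Q.ν j) x) ∧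
  (∀ i j, Q.Adj i j →
    2 ≤ Q.ord i j ∧ lorentz (Q.ν i) (Q.ν j) = -Real.cos (Real.pi / Q.ord i j))

/-- The set of ridges (as unordered pairs of adjacent facets). -/
def ridges : Set (Sym2 (Fin Q.f)) := {p | ∃ i j, p = s(i, j) ∧ Q.Adj i j}

/-- The set of ridges of order `2`. -/
def ridges2 : Set (Sym2 (Fin Q.f)) := {p | ∃ i j, p = s(i, j) ∧ Q.Adj i j ∧ Q.ord i j = 2}

/-- The set of ridges of order `≥ 3`. -/
def ridgesPlus : Set (Sym2 (Fin Q.f)) := {p | ∃ i j, p = s(i, j) ∧ Q.Adj i j ∧ 3 ≤ Q.ord i j}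

/-- `e`, the number of ridges. -/
def numRidges : ℕ := Q.ridges.ncard

/-- `e₂`, the number of ridges of order `2`. -/
def e2 : ℕ := Q.ridges2.ncard

/-- `e₊(P̂)`, the number of ridges of order `≥ 3`. -/
def eplus : ℕ := Q.ridgesPlus.ncard

/-- `δ_P = e - nf + n(n+1)/2`. -/
def deltaP : ℤ := (Q.numRidges : ℤ) - n * Q.f + n * (n + 1) / 2

/-- The hyperbolic point: the solution `(ᾱ₀, b̄₀)` of Vinberg's equations given by
`α_i = 2⟨ν_i, ·⟩` and `b_i = ν_i`. -/
def hypPoint : (Fin Q.f → Vec n) × (Fin Q.f → Vec n) :=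
  (fun i => alphaOf (Q.ν i), Q.ν)

/-- Weak orderability of the associated Coxeter orbifold (for general `n`): the facets may be
relabeled so that each facet `F_i` contains at most `n` ridges of order `2` lying in facets of
higher index, the defining functionals of which are in general position. -/
def WeaklyOrderable : Prop :=
  ∃ σ : Fin Q.f ≃ Fin Q.f, ∀ i,
    {j | σ i < σ j ∧ Q.Adj i j ∧ Q.ord i j = 2}.ncard ≤ n ∧
    LinearIndependent ℝ
      (fun j : {j // σ i < σ j ∧ Q.Adj i j ∧ Q.ord i j = 2} => alphaOf (Q.ν j))

/-- Weak orderability of a compact Coxeter 3-orbifold: the faces can be ordered so that each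
face contains at most `3` edges of order `2` lying in faces of higher index. -/
def WeaklyOrderable3 : Prop :=
  ∃ σ : Fin Q.f ≃ Fin Q.f, ∀ i, {j | σ i < σ j ∧ Q.Adj i j ∧ Q.ord i j = 2}.ncard ≤ 3

end HypData

/-! ### Vinberg's equations and the hyperbolic equations as polynomial maps -/

/-- The polynomial map collecting Vinberg's equations `Φ_{P̂}` (with vanishing components
inserted for index pairs that carry no equation; this does not change the rank of the
differential). -/
def PhiMap (n f : ℕ) (Adj : Fin f → Fin f → Prop) (ord : Fin f → Fin f → ℕ) :
    ((Fin f → Vec n) × (Fin f → Vec n)) →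
      (Fin f → ℝ) × (Fin f → Fin f → ℝ) × (Fin f → Fin f → ℝ) := fun p =>
  (fun i => p.1 i ⬝ᵥ p.2 i - 2,
   fun i j => if i ≠ j ∧ Adj i j ∧ ord i j = 2 then p.1 i ⬝ᵥ p.2 j else 0,
   fun i j => if i < j ∧ Adj i j ∧ 3 ≤ ord i j then
      (p.1 i ⬝ᵥ p.2 j) * (p.1 j ⬝ᵥ p.2 i) - 4 * Real.cos (Real.pi / ord i j) ^ 2
    else 0)

/-- The polynomial map collecting the hyperbolic equations `Ψ_{P̂}`. -/
def PsiMap (n f : ℕ) (Adj : Fin f → Fin f → Prop) (ord : Fin f → Fin f → ℕ) :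
    (Fin f → Vec n) → (Fin f → ℝ) × (Fin f → Fin f → ℝ) := fun b =>
  (fun i => 2 * lorentz (b i) (b i) - 2,
   fun i j => if i < j ∧ Adj i j then
      2 * lorentz (b i) (b j) + 2 * Real.cos (Real.pi / ord i j)
    else 0)

/-- The rank of the differential `DΦ_{P̂}` at a point. -/
def rankDPhi (n f : ℕ) (Adj : Fin f → Fin f → Prop) (ord : Fin f → Fin f → ℕ)
    (p : (Fin f → Vec n) × (Fin f → Vec n)) : ℕ :=
  Module.finrank ℝ ↥(LinearMap.range (fderiv ℝ (PhiMap n f Adj ord) p).toLinearMap)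

/-- The rank of the differential `DΨ_{P̂}` at a point. -/
def rankDPsi (n f : ℕ) (Adj : Fin f → Fin f → Prop) (ord : Fin f → Fin f → ℕ)
    (b : Fin f → Vec n) : ℕ :=
  Module.finrank ℝ ↥(LinearMap.range (fderiv ℝ (PsiMap n f Adj ord) b).toLinearMap)

/-- The dimension of the kernel of the differential `DΨ_{P̂}` at a point. -/
def kerdimDPsi (n f : ℕ) (Adj : Fin f → Fin f → Prop) (ord : Fin f → Fin f → ℕ)
    (b : Fin f → Vec n) : ℕ :=
  Module.finrank ℝ ↥(LinearMap.ker (fderiv ℝ (PsiMap n f Adj ord) b).toLinearMap)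

/-- The set of regular solutions `𝔻̃(P̂)_r`: solutions of Vinberg's equations where the
differential `DΦ_{P̂}` is surjective. -/
def VinbergSetR (n f : ℕ) (Adj : Fin f → Fin f → Prop) (ord : Fin f → Fin f → ℕ) :
    Set ((Fin f → Vec n) × (Fin f → Vec n)) :=
  {p | p ∈ VinbergSet n f Adj ord ∧ Function.Surjective ⇑(fderiv ℝ (PhiMap n f Adj ord) p)}

/-! ### Manifold predicates -/

/-- A subset of a normed space is a smooth embedded submanifold of dimension `k` near each of
its points. -/
def IsSmoothSubmanifoldDim {E : Type*} [NormedAddCommGroup E] [NormedSpace ℝ E]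
    (S : Set E) (k : ℕ) : Prop :=
  ∀ x ∈ S, ∃ (U : Set E) (φ : (Fin k → ℝ) → E), IsOpen U ∧ x ∈ U ∧
    ContDiff ℝ (⊤ : ℕ∞) φ ∧ Topology.IsEmbedding φ ∧ Set.range φ = U ∩ S ∧
    ∀ y, Function.Injective ⇑(fderiv ℝ φ y)

/-- A topological space is a manifold of dimension `k`: every point has an open neighborhood
homeomorphic to `ℝᵏ`. -/
def IsTopManifoldDim (Z : Type*) [TopologicalSpace Z] (k : ℕ) : Prop :=
  ∀ z : Z, ∃ U : Set Z, IsOpen U ∧ z ∈ U ∧ Nonempty (↥U ≃ₜ (Fin k → ℝ))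

/-! ### The Lorentz group `PO(1, n)` -/

/-- A matrix preserves the Lorentzian form. -/
def IsLorentzMat {n : ℕ} (g : Matrix (Fin (n + 1)) (Fin (n + 1)) ℝ) : Prop :=
  ∀ x y : Vec n, lorentz (g *ᵥ x) (g *ᵥ y) = lorentz x y

/-- A matrix lies in `PO(1, n)`: it preserves the Lorentzian form and the positive cone. -/
def IsPOMat {n : ℕ} (g : Matrix (Fin (n + 1)) (Fin (n + 1)) ℝ) : Prop :=
  IsLorentzMat g ∧ ∀ x : Vec n, lorentz x x < 0 → 0 < x 0 → 0 < (g *ᵥ x) 0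

/-- `Hom(π₁(P̂), PO(1,n))` as a real algebraic set: tuples of elements of `PO(1,n)`
satisfying the defining relations of the Coxeter group `π₁(P̂)`. -/
def HomPOSet (n f : ℕ) (Adj : Fin f → Fin f → Prop) (ord : Fin f → Fin f → ℕ) :
    Set (Fin f → Matrix (Fin (n + 1)) (Fin (n + 1)) ℝ) :=
  {ρ | (∀ i, IsPOMat (ρ i)) ∧ (∀ i, ρ i * ρ i = 1) ∧
    ∀ i j, Adj i j → (ρ i * ρ j) ^ ord i j = 1}

/-! ### Projective polytopes and truncation -/


/-- A projective `n`-polytope presented by the linear functionals (row vectors) defining its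
facets: `P = {x ∈ Sⁿ | ∀ i, α_i(x) ≥ 0}`. -/
structure SPolytope (n : ℕ) where
  f : ℕ
  α : Fin f → Vec n

namespace SPolytope
variable {n : ℕ} (S : SPolytope n)

/-- The cone over the polytope. -/
def cone : Set (Vec n) := {v | ∀ i, 0 ≤ S.α i ⬝ᵥ v}

/-- `S` presents a properly convex `n`-polytope with nonempty interior, each inequality
defining a facet. -/
def IsProper : Prop :=
  (∀ v, v ∈ S.cone → -v ∈ S.cone → v = 0) ∧
  (∃ v : Vec n, ∀ i, 0 < S.α i ⬝ᵥ v) ∧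
  (∀ i, ∃ v ∈ S.cone, S.α i ⬝ᵥ v = 0 ∧ ∀ j, j ≠ i → 0 < S.α j ⬝ᵥ v)

/-- A vertex of the polytope (as a ray). -/
def IsVertex (v : Vec n) : Prop :=
  v ∈ S.cone ∧ v ≠ 0 ∧
    Module.finrank ℝ ↥(Submodule.span ℝ {a : Vec n | ∃ i, a = S.α i ∧ S.α i ⬝ᵥ v = 0}) = n

/-- `S` presents an `n`-simplex. -/
def IsSimplex : Prop := S.f = n + 1 ∧ S.IsProper ∧ LinearIndependent ℝ S.α

/-- Two facets are adjacent: they meet in a ridge. -/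
def Adjacent (i j : Fin S.f) : Prop :=
  i ≠ j ∧ ∃ w ∈ S.cone, w ≠ 0 ∧ S.α i ⬝ᵥ w = 0 ∧ S.α j ⬝ᵥ w = 0 ∧
    ∀ k, k ≠ i → k ≠ j → 0 < S.α k ⬝ᵥ w

end SPolytope

/-- Truncation of a polytope at a vertex `v`: cut along a hyperplane `{a = 0}` which avoids
`v` and meets the polytope only in its interior and in the relative interiors of the facets
incident with `v`. -/
def TruncStep {n : ℕ} (S T : SPolytope n) : Prop :=
  S.IsProper ∧ T.IsProper ∧
  ∃ (v a : Vec n) (hf : T.f = S.f + 1),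
    S.IsVertex v ∧ a ⬝ᵥ v < 0 ∧
    (∀ w ∈ S.cone, w ≠ 0 → a ⬝ᵥ w = 0 →
      (∀ i, S.α i ⬝ᵥ w = 0 → S.α i ⬝ᵥ v = 0) ∧ {i | S.α i ⬝ᵥ w = 0}.ncard ≤ 1) ∧
    ∀ k : Fin T.f, T.α k = Fin.snoc (α := fun _ => Vec n) S.α a (Fin.cast hf k)

/-- A polytope obtained from another by iterated truncation. -/
def IteratedTruncation {n : ℕ} (S T : SPolytope n) : Prop :=
  Relation.ReflTransGen TruncStep S T

/-- A truncation `n`-polytope: obtained from an `n`-simplex by iterated truncation. -/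
def IsTruncationPolytope {n : ℕ} (T : SPolytope n) : Prop :=
  ∃ S : SPolytope n, S.IsSimplex ∧ IteratedTruncation S T

/-- Weak orderability of a Coxeter orbifold based on the polytope `S` with ridge orders
`ord`. -/
def SPolytope.WeaklyOrderable {n : ℕ} (S : SPolytope n) (ord : Fin S.f → Fin S.f → ℕ) : Prop :=
  ∃ σ : Fin S.f ≃ Fin S.f, ∀ i,
    {j | σ i < σ j ∧ S.Adjacent i j ∧ ord i j = 2}.ncard ≤ n ∧
    LinearIndependent ℝ
      (fun j : {j // σ i < σ j ∧ S.Adjacent i j ∧ ord i j = 2} => S.α j)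

/-! ### Abstract 3-polyhedra (Steinitz data) -/


/-- An abstract simple 3-polyhedron, presented through its graph (1-skeleton) together with
its face structure, as provided by Steinitz' theorem: a simple, planar (encoded by the face
structure and Euler's formula) graph. -/
structure PolyhedralGraph where
  V : Type
  E : Type
  F : Type
  [fintypeV : Fintype V]
  [fintypeE : Fintype E]
  [fintypeF : Fintype F]
  /-- the two endpoints of an edge -/
  ends : E → Sym2 V
  /-- no loops -/
  loopless : ∀ e, ¬ (ends e).IsDiag
  /-- no multiple edges -/
  noMultiEdge : Function.Injective ends
  /-- the two faces bordering an edge -/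
  edgeFaces : E → Sym2 F
  /-- every edge lies in exactly two distinct faces -/
  edgeFaces_not_diag : ∀ e, ¬ (edgeFaces e).IsDiag
  /-- two faces meet in at most one edge -/
  faces_meet_once : Function.Injective edgeFaces
  /-- every face has at least three edges -/
  face_three_edges : ∀ φ : F, 3 ≤ {e : E | φ ∈ edgeFaces e}.ncard
  /-- Euler's formula (planarity) -/
  euler : (Fintype.card V : ℤ) - Fintype.card E + Fintype.card F = 2

attribute [instance] PolyhedralGraph.fintypeV PolyhedralGraph.fintypeE
  PolyhedralGraph.fintypeF

namespace PolyhedralGraph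
variable (G : PolyhedralGraph)

/-- The underlying simple graph. -/
def graph : SimpleGraph G.V where
  Adj u v := u ≠ v ∧ ∃ e, G.ends e = s(u, v)
  symm := by
    constructor
    rintro u v ⟨huv, e, he⟩
    exact ⟨huv.symm, e, by rwa [Sym2.eq_swap]⟩
  loopless := by constructor; rintro u ⟨h, -⟩; exact h rfl

/-- `G` is 3-connected: removing at most two vertices leaves it connected. -/
def ThreeConnected : Prop :=
  4 ≤ Fintype.card G.V ∧
  ∀ S : Set G.V, S.ncard ≤ 2 → ((G.graph.induce (Sᶜ)).Connected)

/-- `G` is cubic (regular of degree 3); i.e. the polyhedron is simple. -/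
def Cubic : Prop := ∀ v : G.V, {e : G.E | v ∈ G.ends e}.ncard = 3

/-- A prismatic 3-circuit of the dual complex. -/
def HasPrismatic3Circuit : Prop :=
  ∃ (F1 F2 F3 : G.F) (e1 e2 e3 : G.E),
    F1 ≠ F2 ∧ F2 ≠ F3 ∧ F1 ≠ F3 ∧
    G.edgeFaces e1 = s(F1, F2) ∧ G.edgeFaces e2 = s(F2, F3) ∧ G.edgeFaces e3 = s(F3, F1) ∧
    (∀ v : G.V, ¬(v ∈ G.ends e1 ∧ v ∈ G.ends e2)) ∧
    (∀ v : G.V, ¬(v ∈ G.ends e2 ∧ v ∈ G.ends e3)) ∧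
    (∀ v : G.V, ¬(v ∈ G.ends e1 ∧ v ∈ G.ends e3))

/-- `s` is the set of edges crossed by a prismatic 4-circuit of the dual complex. -/
def IsPrismatic4Circuit (s : Finset G.E) : Prop :=
  ∃ (F1 F2 F3 F4 : G.F) (e1 e2 e3 e4 : G.E),
    F1 ≠ F2 ∧ F1 ≠ F3 ∧ F1 ≠ F4 ∧ F2 ≠ F3 ∧ F2 ≠ F4 ∧ F3 ≠ F4 ∧
    G.edgeFaces e1 = s(F1, F2) ∧ G.edgeFaces e2 = s(F2, F3) ∧
    G.edgeFaces e3 = s(F3, F4) ∧ G.edgeFaces e4 = s(F4, F1) ∧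
    (∀ v : G.V, ¬(v ∈ G.ends e1 ∧ v ∈ G.ends e2)) ∧
    (∀ v : G.V, ¬(v ∈ G.ends e1 ∧ v ∈ G.ends e3)) ∧
    (∀ v : G.V, ¬(v ∈ G.ends e1 ∧ v ∈ G.ends e4)) ∧
    (∀ v : G.V, ¬(v ∈ G.ends e2 ∧ v ∈ G.ends e3)) ∧
    (∀ v : G.V, ¬(v ∈ G.ends e2 ∧ v ∈ G.ends e4)) ∧
    (∀ v : G.V, ¬(v ∈ G.ends e3 ∧ v ∈ G.ends e4)) ∧
    s = {e1, e2, e3, e4}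

/-- Weak orderability with respect to a distinguished set of edges (e.g. the edges of order
`2`): the faces can be ordered so that each face contains at most three distinguished edges
lying in faces of higher index. -/
def WeaklyOrderableWith (isTwo : G.E → Prop) : Prop :=
  ∃ ord : G.F → ℕ, Function.Injective ord ∧
    ∀ φ : G.F, {e : G.E | φ ∈ G.edgeFaces e ∧ isTwo e ∧
      ∃ ψ : G.F, ψ ∈ G.edgeFaces e ∧ ord φ < ord ψ}.ncard ≤ 3

end PolyhedralGraph

/-! ### Realization of abstract 3-polyhedra as hyperbolic Coxeter polytopes -/

/-- The edge-order assignment `m` on the abstract 3-polyhedron `G` is realized by a compact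
hyperbolic Coxeter 3-polytope combinatorially equivalent to `G`. -/
def RealizesHyp (G : PolyhedralGraph) (m : G.E → ℕ) : Prop :=
  ∃ (Q : HypData 3) (σ : G.F ≃ Fin Q.f), Q.IsCoxeter ∧
    (∀ φ ψ : G.F, (∃ e, G.edgeFaces e = s(φ, ψ)) ↔ Q.Adj (σ φ) (σ ψ)) ∧
    (∀ (e : G.E) (φ ψ : G.F), G.edgeFaces e = s(φ, ψ) → Q.ord (σ φ) (σ ψ) = m e)

/-- `H_d(P)`: the number of compact hyperbolic Coxeter 3-orbifolds whose base polytope is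
combinatorially equivalent to `G` and whose edge orders are at most `d`. -/
def numHypOrbifolds (G : PolyhedralGraph) (d : ℕ) : ℕ :=
  {m : G.E → ℕ | (∀ e, 2 ≤ m e ∧ m e ≤ d) ∧ RealizesHyp G m}.ncard

/-- `WO_d(P)`: the number of weakly orderable ones among the orbifolds counted by
`numHypOrbifolds`. -/
def numWeaklyOrderable (G : PolyhedralGraph) (d : ℕ) : ℕ :=
  {m : G.E → ℕ | (∀ e, 2 ≤ m e ∧ m e ≤ d) ∧ RealizesHyp G m ∧
    G.WeaklyOrderableWith (fun e => m e = 2)}.ncard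

/-- A real projective structure on the compact Coxeter orbifold `P̂` with combinatorial data
`C`, presented through its developing pair: the universal cover `M` with the deck action of
`π₁(P̂)`, a compact fundamental domain, a developing local homeomorphism (immersion)
`dev : M → Sⁿ` and the associated holonomy homomorphism into `SL^±_{n+1}(ℝ)`. -/
structure ProjStructureOn {n : ℕ} (C : CoxOrbifold n) where
  M : Type
  [topM : TopologicalSpace M]
  [t2M : T2Space M]
  [scM : SimplyConnectedSpace M]
  /-- the deck transformation action of the fundamental group -/
  act : C.group → M ≃ₜ M
  act_one : act 1 = Homeomorph.refl M
  act_mul : ∀ w w' : C.group, act (w * w') = (act w').trans (act w)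
  /-- the action is properly discontinuous -/
  properlyDisc : ∀ K : Set M, IsCompact K →
    {w : C.group | ((act w '' K) ∩ K).Nonempty}.Finite
  /-- a compact fundamental domain -/
  dom : Set M
  dom_compact : IsCompact dom
  dom_covers : ∀ x : M, ∃ w : C.group, x ∈ act w '' dom
  /-- the developing map -/
  dev : M → PSph n
  dev_immersion : IsLocalHomeomorph dev
  /-- the holonomy homomorphism -/
  hol : C.group →* GL (Fin (n + 1)) ℝ
  hol_slpm : ∀ w, IsSLpm (↑(hol w) : Matrix (Fin (n + 1)) (Fin (n + 1)) ℝ)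
  /-- the generating reflections act as reflections -/
  hol_refl : ∀ i, ∃ a b : Vec n, a ⬝ᵥ b = 2 ∧
    (↑(hol (C.coxMatrix.simple i)) : Matrix (Fin (n + 1)) (Fin (n + 1)) ℝ)
      = 1 - Matrix.vecMulVec b a
  equivariant : ∀ w x, dev (act w x) = rayAct (hol w) (dev x)

/-- A projective automorphism of `Sⁿ` preserving the Euclidean space sitting inside an
affine chart: in suitable coordinates, a block matrix `[[O, t], [0, 1]]` with `O ∈ O(n)`. -/
def IsEuclIsomMat {n : ℕ} (M : Matrix (Fin (n + 1)) (Fin (n + 1)) ℝ) : Prop :=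
  (∀ j : Fin n, M (Fin.last n) (Fin.castSucc j) = 0) ∧
  M (Fin.last n) (Fin.last n) = 1 ∧
  (Matrix.of fun i j : Fin n => M (Fin.castSucc i) (Fin.castSucc j))ᵀ *
    (Matrix.of fun i j : Fin n => M (Fin.castSucc i) (Fin.castSucc j)) = 1

/-- The affine transformation of `ℝⁿ` determined by a projective automorphism preserving the
affine chart. -/
def affPart {n : ℕ} (M : Matrix (Fin (n + 1)) (Fin (n + 1)) ℝ) (y : Fin n → ℝ) : Fin n → ℝ :=
  fun i => (∑ j, M (Fin.castSucc i) (Fin.castSucc j) * y j) + M (Fin.castSucc i) (Fin.last n)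


/-- A geometric projective Coxeter group in `SL^±_{n+1}(ℝ)`: reflections `R_i = I − b_i α_i`
(`α_i(b_i) = 2`) in the facets of a properly convex `n`-polytope `P = {α_i ≥ 0}`, such that
`γP̊ ∩ P̊ = ∅` for all `γ ≠ 1` in the generated group. -/
structure ProjCoxGroup (n f : ℕ) where
  /-- the linear functionals defining the fundamental chamber -/
  a : Fin f → Vec n
  /-- the reflection vectors -/
  b : Fin f → Vec n
  /-- the generating reflections, as invertible matrices -/
  R : Fin f → GL (Fin (n + 1)) ℝ
  pairing : ∀ i, a i ⬝ᵥ b i = 2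
  reflEq : ∀ i, (↑(R i) : Matrix (Fin (n + 1)) (Fin (n + 1)) ℝ) = 1 - Matrix.vecMulVec (b i) (a i)
  /-- the chamber is properly convex -/
  properlyConvex : ∀ v : Vec n, (∀ i, 0 ≤ a i ⬝ᵥ v) → (∀ i, 0 ≤ a i ⬝ᵥ (-v)) → v = 0
  /-- the chamber has nonempty interior -/
  thick : ∃ v : Vec n, ∀ i, 0 < a i ⬝ᵥ v
  /-- each inequality defines a facet -/
  facet : ∀ i, ∃ v : Vec n, a i ⬝ᵥ v = 0 ∧ ∀ j, j ≠ i → 0 < a j ⬝ᵥ v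
  /-- the Coxeter group condition `γP̊ ∩ P̊ = ∅` for `γ ≠ 1` -/
  coxeterCond : ∀ γ ∈ Subgroup.closure (Set.range R), γ ≠ 1 →
    ∀ v : Vec n, (∀ i, 0 < a i ⬝ᵥ v) →
      ¬ (∀ i, 0 < a i ⬝ᵥ ((↑γ : Matrix (Fin (n + 1)) (Fin (n + 1)) ℝ) *ᵥ v))

namespace ProjCoxGroup

variable {n f : ℕ} (G : ProjCoxGroup n f)

/-- The group generated by the reflections. -/
def Γ : Subgroup (GL (Fin (n + 1)) ℝ) := Subgroup.closure (Set.range G.R)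

/-- The Cartan matrix `a_{ij} = α_i(b_j)`. -/
def cartan : Matrix (Fin f) (Fin f) ℝ := Matrix.of fun i j => G.a i ⬝ᵥ G.b j

/-- The fundamental chamber `P` (as the cone `{v | ∀ i, α_i(v) ≥ 0}`). -/
def chamberCone : Set (Vec n) := {v | ∀ i, 0 ≤ G.a i ⬝ᵥ v}

/-- `Γ` is perfect: for every point `x` of the fundamental chamber, the subgroup generated by
the reflections in the facets containing `x` is finite (i.e. `P^s = P`). -/
def Perfect : Prop :=
  ∀ v : Vec n, v ≠ 0 → (∀ i, 0 ≤ G.a i ⬝ᵥ v) →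
    (↑(Subgroup.closure {g : GL (Fin (n + 1)) ℝ | ∃ i, g = G.R i ∧ G.a i ⬝ᵥ v = 0}) :
      Set (GL (Fin (n + 1)) ℝ)).Finite

/-- Two facets are adjacent if they meet in a ridge. -/
def Adjacent (i j : Fin f) : Prop :=
  i ≠ j ∧ ∃ v : Vec n, v ≠ 0 ∧ G.a i ⬝ᵥ v = 0 ∧ G.a j ⬝ᵥ v = 0 ∧
    ∀ k, k ≠ i → k ≠ j → 0 < G.a k ⬝ᵥ v

/-- `Γ` is parabolic: it is conjugate to a discrete group generated by reflections in
Euclidean space, leaving no proper affine subspace invariant. -/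
def Parabolic : Prop :=
  DiscreteTopology ↥G.Γ ∧
  ∃ g : GL (Fin (n + 1)) ℝ,
    (∀ γ ∈ G.Γ, IsEuclIsomMat (conjMat g γ)) ∧
    ∀ W : AffineSubspace ℝ (Fin n → ℝ), (W : Set (Fin n → ℝ)).Nonempty →
      (∀ γ ∈ G.Γ, ∀ y ∈ W, affPart (conjMat g γ) y ∈ (W : Set (Fin n → ℝ))) → W = ⊤

end ProjCoxGroup

attribute [instance] ProjStructureOn.topM ProjStructureOn.t2M ProjStructureOn.scM

/-- The tuples of reflections in `SL^±_{n+1}(ℝ)` generating an irreducible dividing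
reflection group (the set `𝒰` of Lemma 3.4). -/
def UTuples (n f : ℕ) : Set (Fin f → GL (Fin (n + 1)) ℝ) :=
  {r | (∀ i, IsReflMat (↑(r i) : Matrix (Fin (n + 1)) (Fin (n + 1)) ℝ) ∧
      IsSLpm (↑(r i) : Matrix (Fin (n + 1)) (Fin (n + 1)) ℝ)) ∧
    IsDividing (Subgroup.closure (Set.range r)) ∧
    IsIrredSubgroup (Subgroup.closure (Set.range r))}

namespace CoxOrbifold
variable {n : ℕ} (C : CoxOrbifold n)

/-- `e`, the number of ridges. -/
def numRidges : ℕ := {p : Sym2 (Fin C.f) | ∃ i j, p = s(i, j) ∧ C.Adj i j}.ncard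

/-- `e₂`, the number of ridges of order 2. -/
def e2 : ℕ := {p : Sym2 (Fin C.f) | ∃ i j, p = s(i, j) ∧ C.Adj i j ∧ C.ord i j = 2}.ncard

/-- `e₊`, the number of ridges of order at least 3. -/
def eplus : ℕ := {p : Sym2 (Fin C.f) | ∃ i j, p = s(i, j) ∧ C.Adj i j ∧ 3 ≤ C.ord i j}.ncard

/-- `δ_P = e - nf + n(n+1)/2`. -/
def deltaP : ℤ := (C.numRidges : ℤ) - n * C.f + n * (n + 1) / 2

end CoxOrbifold

end

section Aux

lemma aux_ncard_setOf_eq {α : Type} [Fintype α] (p : α → Prop) [DecidablePred p] :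
    {x | p x}.ncard = (Finset.univ.filter p).card := by
  rw [Set.ncard_eq_toFinset_card']
  simp [Set.toFinset_setOf]

lemma aux_card_mem_sym2 {V : Type} [Fintype V] (s : Sym2 V) (h : ¬ s.IsDiag) :
    {v | v ∈ s}.ncard = 2 := by
  classical
  induction s using Sym2.ind with
  | _ a b =>
    rw [Sym2.mk_isDiag_iff] at h
    have he : {v | v ∈ s(a, b)} = {a, b} := by
      ext v; simp [Sym2.mem_iff]
    rw [he, Set.ncard_insert_of_notMem (by simp [h]), Set.ncard_singleton]

lemma aux_double_count {V E : Type} [Fintype V] [Fintype E] (ends : E → Sym2 V)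
    (hnd : ∀ e, ¬ (ends e).IsDiag) (P : E → Prop) :
    ∑ v : V, {e : E | v ∈ ends e ∧ P e}.ncard = 2 * {e : E | P e}.ncard := by
  classical
  have key : ∀ e : E, (∑ v : V, if v ∈ ends e ∧ P e then 1 else 0)
      = if P e then 2 else 0 := by
    intro e
    by_cases hP : P e
    · simp only [hP, and_true, if_true]
      rw [← Finset.card_filter, ← aux_ncard_setOf_eq]
      exact aux_card_mem_sym2 (ends e) (hnd e)
    · simp [hP]
  calc ∑ v : V, {e : E | v ∈ ends e ∧ P e}.ncard
      = ∑ v : V, ∑ e : E, if v ∈ ends e ∧ P e then 1 else 0 := by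
        refine Finset.sum_congr rfl fun v _ => ?_
        rw [aux_ncard_setOf_eq, Finset.card_filter]
    _ = ∑ e : E, ∑ v : V, if v ∈ ends e ∧ P e then 1 else 0 := Finset.sum_comm
    _ = ∑ e : E, if P e then 2 else 0 := Finset.sum_congr rfl fun e _ => key e
    _ = 2 * {e : E | P e}.ncard := by
        rw [aux_ncard_setOf_eq, ← Finset.sum_filter]
        simp [mul_comm]

end Aux

/-- Lemma 5.3.  Let `(𝔾, ϑ)` be an edge-labeled graph satisfying
(E1)–(E4).  Then `2e₂ ≤ 4(f - 2)` where `e₂` is the number of `0`-edges and `f` the number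
of faces; in particular some face has at most three `0`-edges. -/
theorem zero_edges_bound_of_labeled_graph (G : PolyhedralGraph)
    (hcubic : G.Cubic) (h3c : G.ThreeConnected) (ϑ : G.E → ZMod 2)
    (hE4 : ∀ v : G.V, (∑ e ∈ Finset.univ.filter (fun e : G.E => v ∈ G.ends e), ϑ e) = 1) :
    2 * {e : G.E | ϑ e = 0}.ncard ≤ 4 * (Fintype.card G.F - 2) ∧
    ∃ φ : G.F, {e : G.E | φ ∈ G.edgeFaces e ∧ ϑ e = 0}.ncard ≤ 3 := by
  classical
  set N0 := {e : G.E | ϑ e = 0}.ncard with hN0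
  -- edge count: 3V = 2E
  have hedge : 3 * Fintype.card G.V = 2 * Fintype.card G.E := by
    have h := aux_double_count G.ends G.loopless (fun _ => True)
    simp only [and_true] at h
    have hE : {e : G.E | True}.ncard = Fintype.card G.E := by
      simp [Set.ncard_univ]
    rw [hE] at h
    rw [← h]
    have h3 : ∀ v : G.V, {e : G.E | v ∈ G.ends e}.ncard = 3 := hcubic
    rw [Finset.sum_congr rfl fun v _ => h3 v, Finset.sum_const, Finset.card_univ,
      smul_eq_mul, mul_comm]
  -- Euler as a ℕ equation
  have heuler : Fintype.card G.V + Fintype.card G.F = Fintype.card G.E + 2 := by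
    have := G.euler; omega
  have hV4 : 4 ≤ Fintype.card G.V := h3c.1
  -- per-vertex bound: at most two 0-edges at each vertex
  have hv2 : ∀ v : G.V, {e : G.E | v ∈ G.ends e ∧ ϑ e = 0}.ncard ≤ 2 := by
    intro v
    have h3 : {e : G.E | v ∈ G.ends e}.ncard = 3 := hcubic v
    have hsub : {e : G.E | v ∈ G.ends e ∧ ϑ e = 0} ⊆ {e : G.E | v ∈ G.ends e} :=
      fun e he => he.1
    have hle : {e : G.E | v ∈ G.ends e ∧ ϑ e = 0}.ncard ≤ 3 :=
      h3 ▸ Set.ncard_le_ncard hsub (Set.toFinite _)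
    by_contra hcon
    push_neg at hcon
    have heqc : {e : G.E | v ∈ G.ends e ∧ ϑ e = 0} = {e : G.E | v ∈ G.ends e} :=
      Set.eq_of_subset_of_ncard_le hsub (by omega) (Set.toFinite _)
    have hall : ∀ e ∈ Finset.univ.filter (fun e : G.E => v ∈ G.ends e), ϑ e = 0 := by
      intro e he
      have hm : e ∈ {e : G.E | v ∈ G.ends e} := by
        simpa using (Finset.mem_filter.mp he).2
      rw [← heqc] at hm
      exact hm.2
    have hsum := hE4 v
    rw [Finset.sum_congr rfl hall, Finset.sum_const_zero] at hsum
    exact absurd hsum (by decide)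
  -- double counts of 0-edges
  have hsumV : ∑ v : G.V, {e : G.E | v ∈ G.ends e ∧ ϑ e = 0}.ncard = 2 * N0 :=
    aux_double_count G.ends G.loopless _
  have hsumF : ∑ φ : G.F, {e : G.E | φ ∈ G.edgeFaces e ∧ ϑ e = 0}.ncard = 2 * N0 :=
    aux_double_count G.edgeFaces G.edgeFaces_not_diag _
  have h2N : 2 * N0 ≤ 2 * Fintype.card G.V := by
    rw [← hsumV]
    calc ∑ v : G.V, {e : G.E | v ∈ G.ends e ∧ ϑ e = 0}.ncard
        ≤ ∑ _v : G.V, 2 := Finset.sum_le_sum fun v _ => hv2 v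
      _ = 2 * Fintype.card G.V := by simp [mul_comm]
  constructor
  · omega
  · by_contra hcon
    push_neg at hcon
    have hge : 4 * Fintype.card G.F ≤ 2 * N0 := by
      rw [← hsumF]
      calc 4 * Fintype.card G.F = ∑ _φ : G.F, 4 := by simp [mul_comm]
        _ ≤ _ := Finset.sum_le_sum fun φ _ => hcon φ
    omega
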